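/- Let a ∈ O be nonzero, c ∈ O, and let X ⊆ O be the set of all solutions of a·x = c. Then: (a) X has exactly one element if and only if n(a) ≠ 0; (b) X ∈ Ω₄ if and only if n(a) = 0 and ā·c = 0; (c) X is empty if and only if neither of the conditions in (a) and (b) holds. -/
import Mathlib


open Matrix

/-- Split octonions over `F`, written in coordinates: an octonion `(α, u; v, β)` with
`u, v ∈ F³` is the vector `(α, u₁, u₂, u₃, v₁, v₂, v₃, β) ∈ F⁸`
(coordinate `0` is `α`, coordinates `1,2,3` are `u`, coordinates `4,5,6` are `v`,
coordinate `7` is `β`). -/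
abbrev Octo (F : Type*) := Fin 8 → F

variable {F : Type*} [Field F]

/-- Zorn vector-matrix multiplication of split octonions:
`(α, u; v, β)·(α', u'; v', β') =
 (αα' + u·v', αu' + β'u − v×v'; α'v + βv' + u×u', ββ' + v·u')`. -/
def octMul (x y : Octo F) : Octo F :=
  ![x 0 * y 0 + (x 1 * y 4 + x 2 * y 5 + x 3 * y 6),
    x 0 * y 1 + y 7 * x 1 - (x 5 * y 6 - x 6 * y 5),
    x 0 * y 2 + y 7 * x 2 - (x 6 * y 4 - x 4 * y 6),
    x 0 * y 3 + y 7 * x 3 - (x 4 * y 5 - x 5 * y 4),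
    y 0 * x 4 + x 7 * y 4 + (x 2 * y 3 - x 3 * y 2),
    y 0 * x 5 + x 7 * y 5 + (x 3 * y 1 - x 1 * y 3),
    y 0 * x 6 + x 7 * y 6 + (x 1 * y 2 - x 2 * y 1),
    x 7 * y 7 + (x 4 * y 1 + x 5 * y 2 + x 6 * y 3)]

/-- Conjugation of split octonions: `(α, u; v, β) ↦ (β, −u; −v, α)`. -/
def octConj (x : Octo F) : Octo F :=
  ![x 7, -(x 1), -(x 2), -(x 3), -(x 4), -(x 5), -(x 6), x 0]

/-- The norm `n(a) = αβ − u·v` of a split octonion. -/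
def octNorm (x : Octo F) : F := x 0 * x 7 - (x 1 * x 4 + x 2 * x 5 + x 3 * x 6)

/-- The trace `tr(a) = α + β` of a split octonion. -/
def octTr (x : Octo F) : F := x 0 + x 7

/-- The unit octonion `1 = (1, 0; 0, 1)`. -/
def octOne : Octo F := ![1, 0, 0, 0, 0, 0, 0, 1]

def octE1 : Octo F := ![1, 0, 0, 0, 0, 0, 0, 0]
def octE2 : Octo F := ![0, 0, 0, 0, 0, 0, 0, 1]
def octU1 : Octo F := ![0, 1, 0, 0, 0, 0, 0, 0]
def octU2 : Octo F := ![0, 0, 1, 0, 0, 0, 0, 0]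
def octU3 : Octo F := ![0, 0, 0, 1, 0, 0, 0, 0]
def octV1 : Octo F := ![0, 0, 0, 0, 1, 0, 0, 0]
def octV2 : Octo F := ![0, 0, 0, 0, 0, 1, 0, 0]
def octV3 : Octo F := ![0, 0, 0, 0, 0, 0, 1, 0]

/-- `g` is an automorphism of the split octonion algebra: an `F`-linear bijection
preserving the multiplication. -/
def IsOctAut (g : Octo F ≃ₗ[F] Octo F) : Prop :=
  ∀ x y : Octo F, g (octMul x y) = octMul (g x) (g y)

/-- `X ∈ Ω_d`: `X` is a `d`-dimensional affine subspace (flat) of `O ≅ F⁸`,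
i.e. `X = V + a` for an `F`-linear subspace `V` of dimension `d` and some `a`. -/
def IsFlat (d : ℕ) (X : Set (Octo F)) : Prop :=
  ∃ (V : Submodule F (Octo F)) (a : Octo F),
    Module.finrank F V = d ∧ X = (fun v => v + a) '' (V : Set (Octo F))
@[simp] theorem oct9_mul_app0 (x y : Octo F) : octMul x y 0 = x 0 * y 0 + (x 1 * y 4 + x 2 * y 5 + x 3 * y 6) := rfl
@[simp] theorem oct9_mul_app1 (x y : Octo F) : octMul x y 1 = x 0 * y 1 + y 7 * x 1 - (x 5 * y 6 - x 6 * y 5) := rfl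
@[simp] theorem oct9_mul_app2 (x y : Octo F) : octMul x y 2 = x 0 * y 2 + y 7 * x 2 - (x 6 * y 4 - x 4 * y 6) := rfl
@[simp] theorem oct9_mul_app3 (x y : Octo F) : octMul x y 3 = x 0 * y 3 + y 7 * x 3 - (x 4 * y 5 - x 5 * y 4) := rfl
@[simp] theorem oct9_mul_app4 (x y : Octo F) : octMul x y 4 = y 0 * x 4 + x 7 * y 4 + (x 2 * y 3 - x 3 * y 2) := rfl
@[simp] theorem oct9_mul_app5 (x y : Octo F) : octMul x y 5 = y 0 * x 5 + x 7 * y 5 + (x 3 * y 1 - x 1 * y 3) := rfl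
@[simp] theorem oct9_mul_app6 (x y : Octo F) : octMul x y 6 = y 0 * x 6 + x 7 * y 6 + (x 1 * y 2 - x 2 * y 1) := rfl
@[simp] theorem oct9_mul_app7 (x y : Octo F) : octMul x y 7 = x 7 * y 7 + (x 4 * y 1 + x 5 * y 2 + x 6 * y 3) := rfl
@[simp] theorem oct9_conj_app0 (x : Octo F) : octConj x 0 = x 7 := rfl
@[simp] theorem oct9_conj_app1 (x : Octo F) : octConj x 1 = -(x 1) := rfl
@[simp] theorem oct9_conj_app2 (x : Octo F) : octConj x 2 = -(x 2) := rfl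
@[simp] theorem oct9_conj_app3 (x : Octo F) : octConj x 3 = -(x 3) := rfl
@[simp] theorem oct9_conj_app4 (x : Octo F) : octConj x 4 = -(x 4) := rfl
@[simp] theorem oct9_conj_app5 (x : Octo F) : octConj x 5 = -(x 5) := rfl
@[simp] theorem oct9_conj_app6 (x : Octo F) : octConj x 6 = -(x 6) := rfl
@[simp] theorem oct9_conj_app7 (x : Octo F) : octConj x 7 = x 0 := rfl
@[simp] theorem oct9_octOne_app0 : (octOne : Octo F) 0 = 1 := rfl
@[simp] theorem oct9_octOne_app1 : (octOne : Octo F) 1 = 0 := rfl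
@[simp] theorem oct9_octOne_app2 : (octOne : Octo F) 2 = 0 := rfl
@[simp] theorem oct9_octOne_app3 : (octOne : Octo F) 3 = 0 := rfl
@[simp] theorem oct9_octOne_app4 : (octOne : Octo F) 4 = 0 := rfl
@[simp] theorem oct9_octOne_app5 : (octOne : Octo F) 5 = 0 := rfl
@[simp] theorem oct9_octOne_app6 : (octOne : Octo F) 6 = 0 := rfl
@[simp] theorem oct9_octOne_app7 : (octOne : Octo F) 7 = 1 := rfl
@[simp] theorem oct9_octE1_app0 : (octE1 : Octo F) 0 = 1 := rfl
@[simp] theorem oct9_octE1_app1 : (octE1 : Octo F) 1 = 0 := rfl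
@[simp] theorem oct9_octE1_app2 : (octE1 : Octo F) 2 = 0 := rfl
@[simp] theorem oct9_octE1_app3 : (octE1 : Octo F) 3 = 0 := rfl
@[simp] theorem oct9_octE1_app4 : (octE1 : Octo F) 4 = 0 := rfl
@[simp] theorem oct9_octE1_app5 : (octE1 : Octo F) 5 = 0 := rfl
@[simp] theorem oct9_octE1_app6 : (octE1 : Octo F) 6 = 0 := rfl
@[simp] theorem oct9_octE1_app7 : (octE1 : Octo F) 7 = 0 := rfl
@[simp] theorem oct9_octE2_app0 : (octE2 : Octo F) 0 = 0 := rfl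
@[simp] theorem oct9_octE2_app1 : (octE2 : Octo F) 1 = 0 := rfl
@[simp] theorem oct9_octE2_app2 : (octE2 : Octo F) 2 = 0 := rfl
@[simp] theorem oct9_octE2_app3 : (octE2 : Octo F) 3 = 0 := rfl
@[simp] theorem oct9_octE2_app4 : (octE2 : Octo F) 4 = 0 := rfl
@[simp] theorem oct9_octE2_app5 : (octE2 : Octo F) 5 = 0 := rfl
@[simp] theorem oct9_octE2_app6 : (octE2 : Octo F) 6 = 0 := rfl
@[simp] theorem oct9_octE2_app7 : (octE2 : Octo F) 7 = 1 := rfl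
@[simp] theorem oct9_octU1_app0 : (octU1 : Octo F) 0 = 0 := rfl
@[simp] theorem oct9_octU1_app1 : (octU1 : Octo F) 1 = 1 := rfl
@[simp] theorem oct9_octU1_app2 : (octU1 : Octo F) 2 = 0 := rfl
@[simp] theorem oct9_octU1_app3 : (octU1 : Octo F) 3 = 0 := rfl
@[simp] theorem oct9_octU1_app4 : (octU1 : Octo F) 4 = 0 := rfl
@[simp] theorem oct9_octU1_app5 : (octU1 : Octo F) 5 = 0 := rfl
@[simp] theorem oct9_octU1_app6 : (octU1 : Octo F) 6 = 0 := rfl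
@[simp] theorem oct9_octU1_app7 : (octU1 : Octo F) 7 = 0 := rfl
@[simp] theorem oct9_octU2_app0 : (octU2 : Octo F) 0 = 0 := rfl
@[simp] theorem oct9_octU2_app1 : (octU2 : Octo F) 1 = 0 := rfl
@[simp] theorem oct9_octU2_app2 : (octU2 : Octo F) 2 = 1 := rfl
@[simp] theorem oct9_octU2_app3 : (octU2 : Octo F) 3 = 0 := rfl
@[simp] theorem oct9_octU2_app4 : (octU2 : Octo F) 4 = 0 := rfl
@[simp] theorem oct9_octU2_app5 : (octU2 : Octo F) 5 = 0 := rfl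
@[simp] theorem oct9_octU2_app6 : (octU2 : Octo F) 6 = 0 := rfl
@[simp] theorem oct9_octU2_app7 : (octU2 : Octo F) 7 = 0 := rfl
@[simp] theorem oct9_octU3_app0 : (octU3 : Octo F) 0 = 0 := rfl
@[simp] theorem oct9_octU3_app1 : (octU3 : Octo F) 1 = 0 := rfl
@[simp] theorem oct9_octU3_app2 : (octU3 : Octo F) 2 = 0 := rfl
@[simp] theorem oct9_octU3_app3 : (octU3 : Octo F) 3 = 1 := rfl
@[simp] theorem oct9_octU3_app4 : (octU3 : Octo F) 4 = 0 := rfl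
@[simp] theorem oct9_octU3_app5 : (octU3 : Octo F) 5 = 0 := rfl
@[simp] theorem oct9_octU3_app6 : (octU3 : Octo F) 6 = 0 := rfl
@[simp] theorem oct9_octU3_app7 : (octU3 : Octo F) 7 = 0 := rfl
@[simp] theorem oct9_octV1_app0 : (octV1 : Octo F) 0 = 0 := rfl
@[simp] theorem oct9_octV1_app1 : (octV1 : Octo F) 1 = 0 := rfl
@[simp] theorem oct9_octV1_app2 : (octV1 : Octo F) 2 = 0 := rfl
@[simp] theorem oct9_octV1_app3 : (octV1 : Octo F) 3 = 0 := rfl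
@[simp] theorem oct9_octV1_app4 : (octV1 : Octo F) 4 = 1 := rfl
@[simp] theorem oct9_octV1_app5 : (octV1 : Octo F) 5 = 0 := rfl
@[simp] theorem oct9_octV1_app6 : (octV1 : Octo F) 6 = 0 := rfl
@[simp] theorem oct9_octV1_app7 : (octV1 : Octo F) 7 = 0 := rfl
@[simp] theorem oct9_octV2_app0 : (octV2 : Octo F) 0 = 0 := rfl
@[simp] theorem oct9_octV2_app1 : (octV2 : Octo F) 1 = 0 := rfl
@[simp] theorem oct9_octV2_app2 : (octV2 : Octo F) 2 = 0 := rfl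
@[simp] theorem oct9_octV2_app3 : (octV2 : Octo F) 3 = 0 := rfl
@[simp] theorem oct9_octV2_app4 : (octV2 : Octo F) 4 = 0 := rfl
@[simp] theorem oct9_octV2_app5 : (octV2 : Octo F) 5 = 1 := rfl
@[simp] theorem oct9_octV2_app6 : (octV2 : Octo F) 6 = 0 := rfl
@[simp] theorem oct9_octV2_app7 : (octV2 : Octo F) 7 = 0 := rfl
@[simp] theorem oct9_octV3_app0 : (octV3 : Octo F) 0 = 0 := rfl
@[simp] theorem oct9_octV3_app1 : (octV3 : Octo F) 1 = 0 := rfl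
@[simp] theorem oct9_octV3_app2 : (octV3 : Octo F) 2 = 0 := rfl
@[simp] theorem oct9_octV3_app3 : (octV3 : Octo F) 3 = 0 := rfl
@[simp] theorem oct9_octV3_app4 : (octV3 : Octo F) 4 = 0 := rfl
@[simp] theorem oct9_octV3_app5 : (octV3 : Octo F) 5 = 0 := rfl
@[simp] theorem oct9_octV3_app6 : (octV3 : Octo F) 6 = 1 := rfl
@[simp] theorem oct9_octV3_app7 : (octV3 : Octo F) 7 = 0 := rfl

/-- Left multiplication by `b` as a linear map. -/
def oct9lmul (b : Octo F) : Octo F →ₗ[F] Octo F where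
  toFun x := octMul b x
  map_add' x y := by
    funext i; fin_cases i <;> simp <;> ring
  map_smul' t x := by
    funext i; fin_cases i <;> simp <;> ring

@[simp] theorem oct9lmul_apply (b x : Octo F) : oct9lmul b x = octMul b x := rfl

theorem oct9_conj_mul_mul (a x : Octo F) :
    octMul (octConj a) (octMul a x) = octNorm a • x := by
  funext i; fin_cases i <;> simp [octNorm] <;> ring

theorem oct9_mul_conj_mul (a x : Octo F) :
    octMul a (octMul (octConj a) x) = octNorm a • x := by
  funext i; fin_cases i <;> simp [octNorm] <;> ring

theorem oct9_mul_one (x : Octo F) : octMul x octOne = x := by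
  funext i; fin_cases i <;> simp

theorem oct9_conj_ne_zero {a : Octo F} (ha : a ≠ 0) : octConj a ≠ 0 := by
  intro hc
  apply ha
  funext i
  fin_cases i
  · simpa using congrFun hc 7
  · simpa using congrFun hc 1
  · simpa using congrFun hc 2
  · simpa using congrFun hc 3
  · simpa using congrFun hc 4
  · simpa using congrFun hc 5
  · simpa using congrFun hc 6
  · simpa using congrFun hc 0

theorem oct9_rank_lower (b : Octo F) (w : Fin 4 → Octo F) (r : Fin 4 → Fin 8) (d : Fin 4 → F)
    (hw : ∀ j, w j ∈ LinearMap.range (oct9lmul b)) (hd : ∀ i, d i ≠ 0)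
    (h : ∀ i j, w j (r i) = if i = j then d i else 0) :
    4 ≤ Module.finrank F (LinearMap.range (oct9lmul b)) := by
  have hli : LinearIndependent F w := by
    rw [Fintype.linearIndependent_iff]
    intro g hg i
    have hgr := congrFun hg (r i)
    simp only [Finset.sum_apply, Pi.smul_apply, smul_eq_mul, Pi.zero_apply, h, mul_ite,
      mul_zero, Finset.sum_ite_eq, Finset.mem_univ, if_true] at hgr
    exact (mul_eq_zero.mp hgr).resolve_right (hd i)
  have hsle : Submodule.span F (Set.range w) ≤ LinearMap.range (oct9lmul b) :=
    Submodule.span_le.2 (Set.range_subset_iff.2 hw)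
  have h4 : Module.finrank F (Submodule.span F (Set.range w)) = 4 := by
    rw [finrank_span_eq_card hli]; simp
  calc (4 : ℕ) = Module.finrank F (Submodule.span F (Set.range w)) := h4.symm
    _ ≤ Module.finrank F (LinearMap.range (oct9lmul b)) := Submodule.finrank_mono hsle

set_option maxHeartbeats 1000000 in
theorem oct9_four_le_rank (b : Octo F) (hb : b ≠ 0) :
    4 ≤ Module.finrank F (LinearMap.range (oct9lmul b)) := by
  obtain ⟨i, hi⟩ := Function.ne_iff.mp hb
  simp only [Pi.zero_apply] at hi
  fin_cases i
  · refine oct9_rank_lower b ![octMul b octE1, octMul b octU1, octMul b octU2, octMul b octU3]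
      ![0, 1, 2, 3] ![b 0, b 0, b 0, b 0]
      (fun j => by fin_cases j <;> exact ⟨_, rfl⟩)
      (fun i => by fin_cases i <;> simpa using hi)
      (fun i j => by fin_cases i <;> fin_cases j <;> simp [Matrix.vecHead, Matrix.vecTail] <;> ring)
  · refine oct9_rank_lower b ![octMul b octV1, octMul b octE2, octMul b octU3, octMul b octU2]
      ![0, 1, 5, 6] ![b 1, b 1, -(b 1), b 1]
      (fun j => by fin_cases j <;> exact ⟨_, rfl⟩)
      (fun i => by fin_cases i <;> simpa using hi)
      (fun i j => by fin_cases i <;> fin_cases j <;> simp [Matrix.vecHead, Matrix.vecTail] <;> ring)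
  · refine oct9_rank_lower b ![octMul b octV2, octMul b octE2, octMul b octU1, octMul b octU3]
      ![0, 2, 6, 4] ![b 2, b 2, -(b 2), b 2]
      (fun j => by fin_cases j <;> exact ⟨_, rfl⟩)
      (fun i => by fin_cases i <;> simpa using hi)
      (fun i j => by fin_cases i <;> fin_cases j <;> simp [Matrix.vecHead, Matrix.vecTail] <;> ring)
  · refine oct9_rank_lower b ![octMul b octV3, octMul b octE2, octMul b octU2, octMul b octU1]
      ![0, 3, 4, 5] ![b 3, b 3, -(b 3), b 3]
      (fun j => by fin_cases j <;> exact ⟨_, rfl⟩)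
      (fun i => by fin_cases i <;> simpa using hi)
      (fun i j => by fin_cases i <;> fin_cases j <;> simp [Matrix.vecHead, Matrix.vecTail] <;> ring)
  · refine oct9_rank_lower b ![octMul b octE1, octMul b octU1, octMul b octV3, octMul b octV2]
      ![4, 7, 2, 3] ![b 4, b 4, b 4, -(b 4)]
      (fun j => by fin_cases j <;> exact ⟨_, rfl⟩)
      (fun i => by fin_cases i <;> simpa using hi)
      (fun i j => by fin_cases i <;> fin_cases j <;> simp [Matrix.vecHead, Matrix.vecTail] <;> ring)
  · refine oct9_rank_lower b ![octMul b octE1, octMul b octU2, octMul b octV1, octMul b octV3]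
      ![5, 7, 3, 1] ![b 5, b 5, b 5, -(b 5)]
      (fun j => by fin_cases j <;> exact ⟨_, rfl⟩)
      (fun i => by fin_cases i <;> simpa using hi)
      (fun i j => by fin_cases i <;> fin_cases j <;> simp [Matrix.vecHead, Matrix.vecTail] <;> ring)
  · refine oct9_rank_lower b ![octMul b octE1, octMul b octU3, octMul b octV2, octMul b octV1]
      ![6, 7, 1, 2] ![b 6, b 6, b 6, -(b 6)]
      (fun j => by fin_cases j <;> exact ⟨_, rfl⟩)
      (fun i => by fin_cases i <;> simpa using hi)
      (fun i j => by fin_cases i <;> fin_cases j <;> simp [Matrix.vecHead, Matrix.vecTail] <;> ring)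
  · refine oct9_rank_lower b ![octMul b octV1, octMul b octV2, octMul b octV3, octMul b octE2]
      ![4, 5, 6, 7] ![b 7, b 7, b 7, b 7]
      (fun j => by fin_cases j <;> exact ⟨_, rfl⟩)
      (fun i => by fin_cases i <;> simpa using hi)
      (fun i j => by fin_cases i <;> fin_cases j <;> simp [Matrix.vecHead, Matrix.vecTail] <;> ring)

theorem oct9_range_ker (a : Octo F) (ha : a ≠ 0) (h0 : octNorm a = 0) :
    LinearMap.range (oct9lmul a) = LinearMap.ker (oct9lmul (octConj a)) ∧
      Module.finrank F (LinearMap.ker (oct9lmul a)) = 4 := by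
  have hrank8 : Module.finrank F (Octo F) = 8 := Module.finrank_fin_fun F
  have hca : octConj a ≠ 0 := oct9_conj_ne_zero ha
  have h1 : LinearMap.range (oct9lmul a) ≤ LinearMap.ker (oct9lmul (octConj a)) := by
    rintro y ⟨x, rfl⟩
    simp [LinearMap.mem_ker, oct9_conj_mul_mul, h0]
  have r1 := oct9_four_le_rank a ha
  have r2 := oct9_four_le_rank (octConj a) hca
  have rn1 := LinearMap.finrank_range_add_finrank_ker (oct9lmul a)
  have rn2 := LinearMap.finrank_range_add_finrank_ker (oct9lmul (octConj a))
  rw [hrank8] at rn1 rn2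
  have hle := Submodule.finrank_mono h1
  exact ⟨Submodule.eq_of_le_of_finrank_le h1 (by omega), by omega⟩
/-- For nonzero `a`, the solution set `X` of `a·x = c` satisfies: (a) `X` is a singleton iff
`n(a) ≠ 0`; (b) `X ∈ Ω₄` iff `n(a) = 0` and `ā·c = 0`; (c) `X = ∅` iff neither holds. -/
theorem stmt_9 [IsAlgClosed F] (a : Octo F) (ha : a ≠ 0) (c : Octo F) :
    ((∃ x₀ : Octo F, {x : Octo F | octMul a x = c} = {x₀}) ↔ octNorm a ≠ 0) ∧
    (IsFlat 4 {x : Octo F | octMul a x = c} ↔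
      (octNorm a = 0 ∧ octMul (octConj a) c = 0)) ∧
    ({x : Octo F | octMul a x = c} = ∅ ↔
      (¬ octNorm a ≠ 0 ∧ ¬ (octNorm a = 0 ∧ octMul (octConj a) c = 0))) := by
  -- the unique solution in the invertible case
  have hsing : octNorm a ≠ 0 →
      {x : Octo F | octMul a x = c} = {(octNorm a)⁻¹ • octMul (octConj a) c} := by
    intro hn
    ext x
    simp only [Set.mem_setOf_eq, Set.mem_singleton_iff]
    constructor
    · intro hx
      have h1 := oct9_conj_mul_mul a x
      rw [hx] at h1
      calc x = (octNorm a)⁻¹ • (octNorm a • x) := (inv_smul_smul₀ hn x).symm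
        _ = (octNorm a)⁻¹ • octMul (octConj a) c := by rw [h1]
    · rintro rfl
      have hs : octMul a ((octNorm a)⁻¹ • octMul (octConj a) c)
          = (octNorm a)⁻¹ • octMul a (octMul (octConj a) c) :=
        (oct9lmul a).map_smul _ _
      rw [hs, oct9_mul_conj_mul, inv_smul_smul₀ hn]
  -- the backward direction of (b)
  have hbackb : octNorm a = 0 → octMul (octConj a) c = 0 →
      IsFlat 4 {x : Octo F | octMul a x = c} := by
    intro hn hcc
    obtain ⟨hrange, hker4⟩ := oct9_range_ker a ha hn
    have hc_mem : c ∈ LinearMap.range (oct9lmul a) := by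
      rw [hrange]
      exact LinearMap.mem_ker.2 hcc
    obtain ⟨x₀, hx₀⟩ := hc_mem
    refine ⟨LinearMap.ker (oct9lmul a), x₀, hker4, ?_⟩
    ext x
    simp only [Set.mem_setOf_eq, Set.mem_image, SetLike.mem_coe, LinearMap.mem_ker]
    constructor
    · intro hx
      refine ⟨x - x₀, ?_, by abel⟩
      have : oct9lmul a (x - x₀) = oct9lmul a x - oct9lmul a x₀ := map_sub _ _ _
      rw [this, hx₀]
      simp only [oct9lmul_apply, hx, sub_self]
    · rintro ⟨v, hv, rfl⟩
      have : oct9lmul a (v + x₀) = oct9lmul a v + oct9lmul a x₀ := map_add _ _ _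
      simp only [oct9lmul_apply] at this hv hx₀ ⊢
      rw [this, hv, hx₀, zero_add]
  -- part (a)
  have parta : (∃ x₀ : Octo F, {x : Octo F | octMul a x = c} = {x₀}) ↔ octNorm a ≠ 0 := by
    constructor
    · rintro ⟨x₀, hX⟩ hn
      have hmem : x₀ ∈ {x : Octo F | octMul a x = c} := by rw [hX]; rfl
      have hx₀ : octMul a x₀ = c := hmem
      have haa : octMul a (octConj a) = 0 := by
        have h1 := oct9_mul_conj_mul a octOne
        rw [oct9_mul_one, hn, zero_smul] at h1
        exact h1
      have hmem2 : x₀ + octConj a ∈ {x : Octo F | octMul a x = c} := by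
        have : octMul a (x₀ + octConj a) = octMul a x₀ + octMul a (octConj a) :=
          map_add (oct9lmul a) _ _
        simp only [Set.mem_setOf_eq, this, haa, add_zero, hx₀]
      rw [hX, Set.mem_singleton_iff] at hmem2
      have : octConj a = 0 := by
        have := congrArg (fun z => z - x₀) hmem2
        simpa using this
      exact oct9_conj_ne_zero ha this
    · intro hn
      exact ⟨_, hsing hn⟩
  -- forward direction of (b)
  have hfwdb : IsFlat 4 {x : Octo F | octMul a x = c} →
      octNorm a = 0 ∧ octMul (octConj a) c = 0 := by
    rintro ⟨V, b, hV, hVX⟩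
    have hbX : b ∈ {x : Octo F | octMul a x = c} := by
      rw [hVX]
      exact ⟨0, V.zero_mem, by simp⟩
    have hn : octNorm a = 0 := by
      by_contra hn
      have hXs := hsing hn
      have hVbot : V = ⊥ := by
        ext v
        simp only [Submodule.mem_bot]
        constructor
        · intro hv
          have h1 : v + b ∈ {x : Octo F | octMul a x = c} := by
            rw [hVX]; exact ⟨v, hv, rfl⟩
          have h2 : (0 : Octo F) + b ∈ {x : Octo F | octMul a x = c} := by
            rw [hVX]; exact ⟨0, V.zero_mem, rfl⟩
          rw [hXs, Set.mem_singleton_iff] at h1 h2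
          have := h1.trans h2.symm
          exact add_right_cancel this
        · rintro rfl; exact V.zero_mem
      rw [hVbot] at hV
      simp at hV
    refine ⟨hn, ?_⟩
    have hx₀ : octMul a b = c := hbX
    rw [← hx₀, oct9_conj_mul_mul, hn, zero_smul]
  refine ⟨parta, ⟨hfwdb, fun h => hbackb h.1 h.2⟩, ?_, ?_⟩
  · intro hE
    constructor
    · intro hn
      have := (hsing hn) ▸ hE
      exact Set.singleton_ne_empty _ this
    · rintro ⟨hn, hcc⟩
      obtain ⟨V, b, hV, hVX⟩ := hbackb hn hcc
      have : b ∈ {x : Octo F | octMul a x = c} := by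
        rw [hVX]; exact ⟨0, V.zero_mem, by simp⟩
      rw [hE] at this
      exact this
  · rintro ⟨hn', hn2⟩
    have hn : octNorm a = 0 := not_not.mp hn'
    rw [Set.eq_empty_iff_forall_notMem]
    intro x hx
    apply hn2
    refine ⟨hn, ?_⟩
    have hx' : octMul a x = c := hx
    rw [← hx', oct9_conj_mul_mul, hn, zero_smul]
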